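/- arXiv:2011.08079 — 3 statements merged into one kernel-verified Lean document; each statement's English description precedes it below -/
import Mathlib

section
/- Let α > 0 and for each a ≥ 0 let b_a > 0 be the unique constant with ∫₀^∞ dz/√(α²z⁴ + (α² + b_a² + a⁴)z² + b_a²) = π/2. Then the map a ↦ b_a is continuous on [0, ∞). -/
/-!
For fixed `a` the integral is a strictly decreasing function of `β > 0` (the integrand decreases
pointwise), and for fixed `β` it is continuous in `a` (dominated convergence, with the bound
`(min α β)⁻¹ (1 + z²)⁻¹`). So if `β < b a₀ < β'`, the strict inequalities
`I(a₀, β') < π/2 < I(a₀, β)` persist for `a` near `a₀`, and monotonicity traps `b a` in `(β, β')`.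
-/

open Real MeasureTheory Set

theorem continuousOn_of_strictAntiOn_of_apply_eq {X : Type*} [TopologicalSpace X] {s : Set X}
    {F : X → ℝ → ℝ} {b : X → ℝ} {m c : ℝ}
    (hcont : ∀ β, m < β → ContinuousOn (fun x ↦ F x β) s)
    (hanti : ∀ x ∈ s, StrictAntiOn (F x) (Ioi m))
    (hbm : ∀ x ∈ s, m < b x) (hb : ∀ x ∈ s, F x (b x) = c) : ContinuousOn b s := by
  intro x₀ hx₀
  refine tendsto_order.2 ⟨fun β hβ ↦ ?_, fun β hβ ↦ ?_⟩
  · rcases le_or_gt β m with hβm | hβm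
    · filter_upwards [self_mem_nhdsWithin] with x hx using hβm.trans_lt (hbm x hx)
    · have hc : c < F x₀ β := hb x₀ hx₀ ▸ hanti x₀ hx₀ hβm (hbm x₀ hx₀) hβ
      filter_upwards [(hcont β hβm x₀ hx₀).eventually_const_lt hc, self_mem_nhdsWithin]
        with x hx hxs
      exact ((hanti x hxs).lt_iff_gt (hbm x hxs) hβm).1 (by rwa [hb x hxs])
  · have hβm : m < β := (hbm x₀ hx₀).trans hβ
    have hc : F x₀ β < c := hb x₀ hx₀ ▸ hanti x₀ hx₀ (hbm x₀ hx₀) hβm hβ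
    filter_upwards [(hcont β hβm x₀ hx₀).eventually_lt_const hc, self_mem_nhdsWithin]
      with x hx hxs
    exact ((hanti x hxs).lt_iff_gt hβm (hbm x hxs)).1 (by rwa [hb x hxs])

theorem MeasureTheory.setIntegral_lt_setIntegral_of_forall_lt {X : Type*} [MeasurableSpace X]
    {μ : Measure X} {s : Set X} {f g : X → ℝ} (hs : MeasurableSet s) (hμs : μ s ≠ 0)
    (hf : IntegrableOn f s μ) (hg : IntegrableOn g s μ) (hlt : ∀ x ∈ s, f x < g x) :
    ∫ x in s, f x ∂μ < ∫ x in s, g x ∂μ := by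
  rw [← sub_pos, ← integral_sub hg hf, integral_pos_iff_support_of_nonneg_ae
    (ae_restrict_of_forall_mem hs fun x hx ↦ (sub_pos.2 (hlt x hx)).le) (hg.sub hf),
    Measure.restrict_apply' hs]
  exact pos_iff_ne_zero.2 fun h ↦ hμs <| measure_mono_null
    (show s ⊆ _ ∩ s from fun x hx ↦ ⟨(sub_pos.2 (hlt x hx)).ne', hx⟩) h

noncomputable def invSqrtQuartic (α a β z : ℝ) : ℝ :=
  1 / √(α ^ 2 * z ^ 4 + (α ^ 2 + β ^ 2 + a ^ 4) * z ^ 2 + β ^ 2)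

section invSqrtQuartic

variable {α β : ℝ}

lemma Continuous.invSqrtQuartic {X : Type*} [TopologicalSpace X] {a z : X → ℝ} (hβ : 0 < β)
    (ha : Continuous a) (hz : Continuous z) :
    Continuous fun x ↦ invSqrtQuartic α (a x) β (z x) :=
  continuous_const.div (by fun_prop) fun _ ↦ by positivity

lemma norm_invSqrtQuartic_le (hα : 0 < α) (hβ : 0 < β) (a z : ℝ) :
    ‖invSqrtQuartic α a β z‖ ≤ (min α β)⁻¹ * (1 + z ^ 2)⁻¹ := by
  have hm : 0 < min α β := lt_min hα hβ
  have hmα : min α β ^ 2 ≤ α ^ 2 := pow_le_pow_left₀ hm.le (min_le_left α β) 2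
  have hmβ : min α β ^ 2 ≤ β ^ 2 := pow_le_pow_left₀ hm.le (min_le_right α β) 2
  -- the quartic dominates `(min α β * (1 + z²))²` coefficientwise
  have hsq : min α β * (1 + z ^ 2) ≤ √(α ^ 2 * z ^ 4 + (α ^ 2 + β ^ 2 + a ^ 4) * z ^ 2 + β ^ 2) :=
    Real.le_sqrt_of_sq_le <| by
      nlinarith [sq_nonneg z, pow_nonneg (sq_nonneg z) 2, sq_nonneg (a ^ 2 * z)]
  rw [invSqrtQuartic, Real.norm_eq_abs, abs_of_nonneg (by positivity), ← mul_inv, one_div]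
  exact inv_anti₀ (by positivity) hsq

lemma integrable_invSqrtQuartic (hα : 0 < α) (hβ : 0 < β) (a : ℝ) :
    Integrable (invSqrtQuartic α a β) :=
  (integrable_inv_one_add_sq.const_mul (min α β)⁻¹).mono'
    (continuous_const.invSqrtQuartic hβ continuous_id).aestronglyMeasurable
    (ae_of_all _ (norm_invSqrtQuartic_le hα hβ a))

lemma strictAntiOn_integral_invSqrtQuartic (hα : 0 < α) (a : ℝ) :
    StrictAntiOn (fun β ↦ ∫ z in Ioi 0, invSqrtQuartic α a β z) (Ioi 0) := by
  intro β₁ (hβ₁ : 0 < β₁) β₂ hβ₂ hβ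
  refine setIntegral_lt_setIntegral_of_forall_lt measurableSet_Ioi (by simp)
    (integrable_invSqrtQuartic hα hβ₂ a).integrableOn
    (integrable_invSqrtQuartic hα hβ₁ a).integrableOn
    fun z (hz : 0 < z) ↦ ?_
  unfold invSqrtQuartic
  gcongr

lemma continuous_integral_invSqrtQuartic (hα : 0 < α) (hβ : 0 < β) :
    Continuous fun a ↦ ∫ z in Ioi 0, invSqrtQuartic α a β z :=
  continuous_of_dominated
    (fun _ ↦ (continuous_const.invSqrtQuartic hβ continuous_id).aestronglyMeasurable)
    (fun a ↦ ae_of_all _ (norm_invSqrtQuartic_le hα hβ a))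
    (integrable_inv_one_add_sq.const_mul (min α β)⁻¹).integrableOn
    (ae_of_all _ fun _ ↦ continuous_id.invSqrtQuartic hβ continuous_const)

end invSqrtQuartic

/-- For `α > 0`, if for each `a ≥ 0` the constant `b a > 0` satisfies
`∫₀^∞ dz/√(α²z⁴ + (α² + (b a)² + a⁴)z² + (b a)²) = π/2`, then `a ↦ b a` is continuous
on `[0, ∞)`. -/
theorem stmt4 (α : ℝ) (hα : 0 < α) (b : ℝ → ℝ)
    (hb : ∀ a : ℝ, 0 ≤ a → 0 < b a ∧
      (∫ z in Set.Ioi (0 : ℝ),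
        1 / Real.sqrt (α ^ 2 * z ^ 4 + (α ^ 2 + (b a) ^ 2 + a ^ 4) * z ^ 2 + (b a) ^ 2)) =
        π / 2) :
    ContinuousOn b (Set.Ici 0) :=
  continuousOn_of_strictAntiOn_of_apply_eq (F := fun a β ↦ ∫ z in Ioi 0, invSqrtQuartic α a β z)
    (fun _ hβ ↦ (continuous_integral_invSqrtQuartic hα hβ).continuousOn)
    (fun a _ ↦ strictAntiOn_integral_invSqrtQuartic hα a)
    (fun a ha ↦ (hb a ha).1) (fun a ha ↦ (hb a ha).2)
end

section
/- Let α > 0, b > 0, a ≥ 0, set c² = α² + b² + a⁴, w = √((c² + √(c⁴ − 4α²b²))/(2α²)), and let λ ∈ [0, π/2) satisfy w²cos²λ = (c² − √(c⁴ − 4α²b²))/(2α²). Then a² ∫₀^∞ dz/((1 + z²)√(α²z⁴ + c²z² + b²)) = (a²/(αw)) ∫₀^{π/2} (sin²φ/(w² − (w² − 1)sin²φ)) · dφ/√(1 − sin²λ·sin²φ). -/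
open Real MeasureTheory Set

/-!
Since `w²` and `w² cos² λ` are the roots of `α² t² - c² t + b²`, the quartic factors as
`α² (z² + w² cos² λ) (z² + w²)`. Now substitute `z = w cot φ`, which maps `(0, π/2)`
bijectively onto `(0, ∞)` with `|dz/dφ| = w / sin² φ`. For every `k` one has
`z² + k = (w² - (w² - k) sin² φ) / sin² φ`, so each of `1 + z²`, `z² + w² cos² λ` and `z² + w²`
becomes a simple expression in `sin² φ`, and the powers of `sin φ` cancel.
-/

theorem quartic_eq_mul_of_discrim_nonneg {α b c : ℝ} (hα : α ≠ 0)
    (hd : 4 * α ^ 2 * b ^ 2 ≤ c ^ 2) (z : ℝ) :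
    α ^ 2 * z ^ 4 + c * z ^ 2 + b ^ 2 =
      α ^ 2 * (z ^ 2 + (c - √(c ^ 2 - 4 * α ^ 2 * b ^ 2)) / (2 * α ^ 2)) *
        (z ^ 2 + (c + √(c ^ 2 - 4 * α ^ 2 * b ^ 2)) / (2 * α ^ 2)) := by
  have hs := sq_sqrt (sub_nonneg.mpr hd)
  set s := √(c ^ 2 - 4 * α ^ 2 * b ^ 2)
  field_simp
  linear_combination hs

theorem sin_pos_of_mem_Ioo_pi_div_two {φ : ℝ} (hφ : φ ∈ Ioo 0 (π / 2)) : 0 < sin φ :=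
  sin_pos_of_pos_of_lt_pi hφ.1 (by linarith [hφ.2, pi_pos])

theorem cos_pos_of_mem_Ioo_pi_div_two {φ : ℝ} (hφ : φ ∈ Ioo 0 (π / 2)) : 0 < cos φ :=
  cos_pos_of_mem_Ioo ⟨by linarith [hφ.1, pi_pos], hφ.2⟩

theorem mul_cot_sq_add {φ : ℝ} (hφ : sin φ ≠ 0) (w k : ℝ) :
    (w * cot φ) ^ 2 + k = (w ^ 2 - (w ^ 2 - k) * sin φ ^ 2) / sin φ ^ 2 := by
  rw [cot_eq_cos_div_sin]
  field_simp
  linear_combination w ^ 2 * sin_sq_add_cos_sq φ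

theorem hasDerivAt_mul_cot {φ : ℝ} (hφ : sin φ ≠ 0) (w : ℝ) :
    HasDerivAt (fun φ => w * cot φ) (-(w / sin φ ^ 2)) φ := by
  simp_rw [cot_eq_cos_div_sin]
  refine (((hasDerivAt_cos φ).div (hasDerivAt_sin φ) hφ).const_mul w).congr_deriv ?_
  field_simp
  linear_combination -w * sin_sq_add_cos_sq φ

theorem arctan_div_mul_cot {w φ : ℝ} (hw : w ≠ 0) (hφ : φ ∈ Ioo 0 (π / 2)) :
    arctan (w / (w * cot φ)) = φ := by
  have hs := (sin_pos_of_mem_Ioo_pi_div_two hφ).ne'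
  have hc := (cos_pos_of_mem_Ioo_pi_div_two hφ).ne'
  rw [show w / (w * cot φ) = tan φ by rw [cot_eq_cos_div_sin, tan_eq_sin_div_cos]; field_simp]
  exact arctan_tan (by linarith [hφ.1, pi_pos]) hφ.2

theorem image_mul_cot_Ioo {w : ℝ} (hw : 0 < w) :
    (fun φ => w * cot φ) '' Ioo 0 (π / 2) = Ioi 0 := by
  ext z
  constructor
  · rintro ⟨φ, hφ, rfl⟩
    show 0 < w * cot φ
    rw [cot_eq_cos_div_sin]
    exact mul_pos hw
      (div_pos (cos_pos_of_mem_Ioo_pi_div_two hφ) (sin_pos_of_mem_Ioo_pi_div_two hφ))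
  · intro (hz : 0 < z)
    refine ⟨arctan (w / z), ⟨?_, arctan_lt_pi_div_two _⟩, ?_⟩
    · simpa [arctan_zero] using arctan_strictMono (div_pos hw hz)
    · have : 0 < √(1 + (w / z) ^ 2) := by positivity
      simp only [cot_eq_cos_div_sin, cos_arctan, sin_arctan]
      field_simp

theorem integral_Ioi_eq_integral_mul_cot {w : ℝ} (hw : 0 < w) (g : ℝ → ℝ) :
    ∫ z in Ioi 0, g z = ∫ φ in Ioo 0 (π / 2), w / sin φ ^ 2 * g (w * cot φ) := by
  have hinj : InjOn (fun φ => w * cot φ) (Ioo 0 (π / 2)) :=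
    LeftInvOn.injOn (f₁' := fun z => arctan (w / z)) fun φ hφ => arctan_div_mul_cot hw.ne' hφ
  rw [← image_mul_cot_Ioo hw, integral_image_eq_integral_abs_deriv_smul measurableSet_Ioo
    (fun φ hφ => (hasDerivAt_mul_cot (sin_pos_of_mem_Ioo_pi_div_two hφ).ne' w).hasDerivWithinAt)
    hinj]
  refine setIntegral_congr_fun measurableSet_Ioo fun φ hφ => ?_
  have : 0 < w / sin φ ^ 2 := div_pos hw (pow_pos (sin_pos_of_mem_Ioo_pi_div_two hφ) 2)
  rw [smul_eq_mul, abs_neg, abs_of_pos this]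

theorem integrand_comp_mul_cot {α w : ℝ} (hα : 0 < α) (hw : 0 < w) (lam : ℝ) {φ : ℝ}
    (hφ : φ ∈ Ioo 0 (π / 2)) :
    w / sin φ ^ 2 * (1 / ((1 + (w * cot φ) ^ 2) *
      √(α ^ 2 * ((w * cot φ) ^ 2 + w ^ 2 * cos lam ^ 2) * ((w * cot φ) ^ 2 + w ^ 2)))) =
      1 / (α * w) * (sin φ ^ 2 / (w ^ 2 - (w ^ 2 - 1) * sin φ ^ 2) *
        (1 / √(1 - sin lam ^ 2 * sin φ ^ 2))) := by
  have hs := sin_pos_of_mem_Ioo_pi_div_two hφ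
  have hs1 : sin φ ^ 2 < 1 := by
    nlinarith [sin_sq_add_cos_sq φ, cos_pos_of_mem_Ioo_pi_div_two hφ]
  rw [add_comm (1 : ℝ), mul_cot_sq_add hs.ne', mul_cot_sq_add hs.ne', mul_cot_sq_add hs.ne']
  have hrad : α ^ 2 * ((w ^ 2 - (w ^ 2 - w ^ 2 * cos lam ^ 2) * sin φ ^ 2) / sin φ ^ 2) *
      ((w ^ 2 - (w ^ 2 - w ^ 2) * sin φ ^ 2) / sin φ ^ 2) =
      (α * w ^ 2 / sin φ ^ 2) ^ 2 * (1 - sin lam ^ 2 * sin φ ^ 2) := by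
    field_simp
    linear_combination sin φ ^ 2 * sin_sq_add_cos_sq lam
  have hN : 0 < w ^ 2 - (w ^ 2 - 1) * sin φ ^ 2 := by nlinarith
  have hR : 0 < √(1 - sin lam ^ 2 * sin φ ^ 2) :=
    sqrt_pos.2 (by nlinarith [sin_sq_le_one lam, sq_nonneg (sin lam)])
  rw [hrad, sqrt_mul (sq_nonneg _), sqrt_sq (by positivity)]
  field_simp

theorem stmt12_general (α b a : ℝ) (hα : 0 < α)
    (c2 : ℝ) (hc2 : c2 = α ^ 2 + b ^ 2 + a ^ 4)
    (w : ℝ) (hw : w = Real.sqrt ((c2 + Real.sqrt (c2 ^ 2 - 4 * α ^ 2 * b ^ 2)) / (2 * α ^ 2)))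
    (lam : ℝ)
    (hcos : w ^ 2 * Real.cos lam ^ 2 =
      (c2 - Real.sqrt (c2 ^ 2 - 4 * α ^ 2 * b ^ 2)) / (2 * α ^ 2)) :
    a ^ 2 * (∫ z in Set.Ioi (0 : ℝ),
        1 / ((1 + z ^ 2) * Real.sqrt (α ^ 2 * z ^ 4 + c2 * z ^ 2 + b ^ 2))) =
      (a ^ 2 / (α * w)) *
        ∫ φ in (0 : ℝ)..(π / 2),
          (Real.sin φ ^ 2 / (w ^ 2 - (w ^ 2 - 1) * Real.sin φ ^ 2)) *
            (1 / Real.sqrt (1 - Real.sin lam ^ 2 * Real.sin φ ^ 2)) := by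
  have hc2pos : 0 < c2 := by rw [hc2]; positivity
  have hdisc : 4 * α ^ 2 * b ^ 2 ≤ c2 ^ 2 := by
    rw [hc2]; nlinarith [sq_nonneg (α ^ 2 - b ^ 2), pow_nonneg (sq_nonneg a) 2]
  have hwpos : 0 < w := by rw [hw]; positivity
  have hw2 : w ^ 2 = (c2 + √(c2 ^ 2 - 4 * α ^ 2 * b ^ 2)) / (2 * α ^ 2) := by
    rw [hw]; exact sq_sqrt (by positivity)
  have hfac (z : ℝ) : α ^ 2 * z ^ 4 + c2 * z ^ 2 + b ^ 2 =
      α ^ 2 * (z ^ 2 + w ^ 2 * cos lam ^ 2) * (z ^ 2 + w ^ 2) := by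
    rw [hcos, hw2]; exact quartic_eq_mul_of_discrim_nonneg hα.ne' hdisc z
  simp_rw [hfac]
  rw [integral_Ioi_eq_integral_mul_cot hwpos, intervalIntegral.integral_of_le pi_div_two_pos.le,
    integral_Ioc_eq_integral_Ioo, div_eq_mul_one_div (a ^ 2), mul_assoc]
  congr 1
  rw [← integral_const_mul]
  exact setIntegral_congr_fun measurableSet_Ioo fun φ hφ =>
    integrand_comp_mul_cot hα hwpos lam hφ

/-- With `α > 0`, `b > 0`, `a ≥ 0`, `c² = α² + b² + a⁴`,
`w = √((c² + √(c⁴ − 4α²b²))/(2α²))` and `λ ∈ [0, π/2)` defined by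
`w²cos²λ = (c² − √(c⁴ − 4α²b²))/(2α²)`, one has
`a² ∫₀^∞ dz/((1 + z²)√(α²z⁴ + c²z² + b²)) =
 (a²/(αw)) ∫₀^{π/2} (sin²φ/(w² − (w² − 1)sin²φ)) dφ/√(1 − sin²λ sin²φ)`. -/
theorem stmt12 (α b a : ℝ) (hα : 0 < α) (hb : 0 < b) (ha : 0 ≤ a)
    (c2 : ℝ) (hc2 : c2 = α ^ 2 + b ^ 2 + a ^ 4)
    (w : ℝ) (hw : w = Real.sqrt ((c2 + Real.sqrt (c2 ^ 2 - 4 * α ^ 2 * b ^ 2)) / (2 * α ^ 2)))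
    (lam : ℝ) (hlam : lam ∈ Set.Ico (0 : ℝ) (π / 2))
    (hcos : w ^ 2 * Real.cos lam ^ 2 =
      (c2 - Real.sqrt (c2 ^ 2 - 4 * α ^ 2 * b ^ 2)) / (2 * α ^ 2)) :
    a ^ 2 * (∫ z in Set.Ioi (0 : ℝ),
        1 / ((1 + z ^ 2) * Real.sqrt (α ^ 2 * z ^ 4 + c2 * z ^ 2 + b ^ 2))) =
      (a ^ 2 / (α * w)) *
        ∫ φ in (0 : ℝ)..(π / 2),
          (Real.sin φ ^ 2 / (w ^ 2 - (w ^ 2 - 1) * Real.sin φ ^ 2)) *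
            (1 / Real.sqrt (1 - Real.sin lam ^ 2 * Real.sin φ ^ 2)) :=
  stmt12_general α b a hα c2 hc2 w hw lam hcos
end

section
/- Let α > 0, b > 0 satisfy ∫₀^{π/2} du/√(1 − (1 − b²/α²)·sin²u) = απ/2. Then there exists a strictly increasing continuous function g : [0, π] → [0, π], twice differentiable on (0, π), such that ∫₀^{g(y)} du/√(1 − (1 − b²/α²)·sin²u) = αy for all y ∈ [0, π]; this g satisfies g'' + cot(g)(α² − (g')²) = 0 on (0, π), g(0) = 0, g(π/2) = π/2, g'(π/2) = b, and g(π) = π. -/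
open Real Filter

/-!
Put `m = 1 - b² / α²` and let `am` be the Jacobi amplitude, the inverse of the incomplete
elliptic integral `F(θ | m) = ∫₀^θ du / √(1 - m sin² u)`; take `g y = am (α y)`.
Differentiating `F (am x) = x` gives `am' = √(1 - m sin² am)`, hence `am'' = -m sin am cos am`,
i.e. `am'' + cot am (1 - am'²) = 0`, and rescaling by `α` gives the equation for `g`.
Since the integrand is symmetric under `u ↦ π - u`, `F(π) = 2 F(π/2)`, so the hypothesis
`F(π/2) = απ/2` forces `g(π/2) = π/2` and `g(π) = π`.
-/

theorem surjective_of_le_deriv {f : ℝ → ℝ} {c : ℝ} (hc : 0 < c) (hf : Differentiable ℝ f)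
    (hf' : ∀ x, c ≤ deriv f x) : Function.Surjective f := by
  have hgrowth := mul_sub_le_image_sub_of_le_deriv hf hf'
  refine hf.continuous.surjective ?_ ?_
  · refine tendsto_atTop_mono' atTop ((eventually_ge_atTop 0).mono fun x hx => ?_)
      (tendsto_atTop_add_const_left atTop (f 0) (tendsto_id.const_mul_atTop hc))
    show f 0 + c * x ≤ f x
    linarith [hgrowth hx]
  · refine tendsto_atBot_mono' atBot ((eventually_le_atBot 0).mono fun x hx => ?_)
      (tendsto_atBot_add_const_left atBot (f 0) (tendsto_id.const_mul_atBot hc))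
    show f x ≤ f 0 + c * x
    linarith [hgrowth hx]

noncomputable def ellipticF (m θ : ℝ) : ℝ :=
  ∫ u in (0 : ℝ)..θ, 1 / √(1 - m * sin u ^ 2)

noncomputable def jacobiAmplitude (m : ℝ) : ℝ → ℝ :=
  Function.invFun (ellipticF m)

section Elliptic

variable {m : ℝ}

theorem one_sub_mul_sin_sq_pos (hm : m < 1) (u : ℝ) : 0 < 1 - m * sin u ^ 2 := by
  rcases le_or_gt m 0 with hm0 | hm0
  · nlinarith [sq_nonneg (sin u)]
  · nlinarith [sin_sq_le_one u]

theorem continuous_one_div_sqrt_one_sub_mul_sin_sq (hm : m < 1) :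
    Continuous fun u => 1 / √(1 - m * sin u ^ 2) :=
  continuous_const.div (by fun_prop) fun u => (sqrt_pos.2 (one_sub_mul_sin_sq_pos hm u)).ne'

theorem hasDerivAt_ellipticF (hm : m < 1) (θ : ℝ) :
    HasDerivAt (ellipticF m) (1 / √(1 - m * sin θ ^ 2)) θ :=
  ((continuous_one_div_sqrt_one_sub_mul_sin_sq hm).integral_hasStrictDerivAt 0 θ).hasDerivAt

theorem strictMono_ellipticF (hm : m < 1) : StrictMono (ellipticF m) :=
  strictMono_of_hasDerivAt_pos (hasDerivAt_ellipticF hm) fun u =>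
    one_div_pos.2 (sqrt_pos.2 (one_sub_mul_sin_sq_pos hm u))

theorem inv_sqrt_one_add_abs_le_one_div_sqrt (hm : m < 1) (u : ℝ) :
    (√(1 + |m|))⁻¹ ≤ 1 / √(1 - m * sin u ^ 2) := by
  have hle : 1 - m * sin u ^ 2 ≤ 1 + |m| := by
    nlinarith [sin_sq_le_one u, sq_nonneg (sin u), neg_abs_le m, abs_nonneg m]
  rw [one_div]
  exact inv_anti₀ (sqrt_pos.2 (one_sub_mul_sin_sq_pos hm u)) (sqrt_le_sqrt hle)

theorem surjective_ellipticF (hm : m < 1) : Function.Surjective (ellipticF m) :=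
  surjective_of_le_deriv (by positivity) (fun θ => (hasDerivAt_ellipticF hm θ).differentiableAt)
    fun θ => (hasDerivAt_ellipticF hm θ).deriv ▸ inv_sqrt_one_add_abs_le_one_div_sqrt hm θ

theorem ellipticF_zero : ellipticF m 0 = 0 :=
  intervalIntegral.integral_same

theorem ellipticF_pi (hm : m < 1) : ellipticF m π = 2 * ellipticF m (π / 2) := by
  have hint :=
    (continuous_one_div_sqrt_one_sub_mul_sin_sq hm).intervalIntegrable (μ := MeasureTheory.volume)
  have hreflect : ∫ u in (π / 2)..π, 1 / √(1 - m * sin u ^ 2) = ellipticF m (π / 2) := by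
    have h := intervalIntegral.integral_comp_sub_left (fun u => 1 / √(1 - m * sin u ^ 2)) π
      (a := 0) (b := π / 2)
    simp only [sin_pi_sub, sub_zero, sub_half] at h
    exact h.symm
  rw [ellipticF, ← intervalIntegral.integral_add_adjacent_intervals (hint 0 (π / 2))
    (hint (π / 2) π), hreflect, ellipticF]
  ring

theorem ellipticF_jacobiAmplitude (hm : m < 1) (x : ℝ) :
    ellipticF m (jacobiAmplitude m x) = x :=
  Function.rightInverse_invFun (surjective_ellipticF hm) x

theorem jacobiAmplitude_ellipticF (hm : m < 1) (θ : ℝ) :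
    jacobiAmplitude m (ellipticF m θ) = θ :=
  Function.leftInverse_invFun (strictMono_ellipticF hm).injective θ

theorem jacobiAmplitude_zero (hm : m < 1) : jacobiAmplitude m 0 = 0 := by
  simpa only [ellipticF_zero] using jacobiAmplitude_ellipticF hm 0

theorem strictMono_jacobiAmplitude (hm : m < 1) : StrictMono (jacobiAmplitude m) := by
  intro x y hxy
  rwa [← (strictMono_ellipticF hm).lt_iff_lt, ellipticF_jacobiAmplitude hm,
    ellipticF_jacobiAmplitude hm]

theorem continuous_jacobiAmplitude (hm : m < 1) : Continuous (jacobiAmplitude m) :=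
  (strictMono_jacobiAmplitude hm).monotone.continuous_of_surjective
    (Function.LeftInverse.surjective (jacobiAmplitude_ellipticF hm))

theorem hasDerivAt_jacobiAmplitude (hm : m < 1) (x : ℝ) :
    HasDerivAt (jacobiAmplitude m) (√(1 - m * sin (jacobiAmplitude m x) ^ 2)) x := by
  have h := (hasDerivAt_ellipticF hm (jacobiAmplitude m x)).of_local_left_inverse
    (continuous_jacobiAmplitude hm).continuousAt
    (one_div_pos.2 (sqrt_pos.2 (one_sub_mul_sin_sq_pos hm _))).ne'
    (Eventually.of_forall (ellipticF_jacobiAmplitude hm))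
  rwa [one_div, inv_inv] at h

theorem differentiable_jacobiAmplitude (hm : m < 1) : Differentiable ℝ (jacobiAmplitude m) :=
  fun x => (hasDerivAt_jacobiAmplitude hm x).differentiableAt

theorem deriv_jacobiAmplitude (hm : m < 1) :
    deriv (jacobiAmplitude m) = fun x => √(1 - m * sin (jacobiAmplitude m x) ^ 2) :=
  funext fun x => (hasDerivAt_jacobiAmplitude hm x).deriv

theorem hasDerivAt_deriv_jacobiAmplitude (hm : m < 1) (x : ℝ) :
    HasDerivAt (deriv (jacobiAmplitude m))
      (-(m * sin (jacobiAmplitude m x) * cos (jacobiAmplitude m x))) x := by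
  rw [deriv_jacobiAmplitude hm]
  have hpos := one_sub_mul_sin_sq_pos hm (jacobiAmplitude m x)
  convert (((hasDerivAt_jacobiAmplitude hm x).sin.fun_pow 2).const_mul m).const_sub 1
    |>.sqrt hpos.ne' using 1
  field_simp
  ring

theorem differentiable_deriv_jacobiAmplitude (hm : m < 1) :
    Differentiable ℝ (deriv (jacobiAmplitude m)) :=
  fun x => (hasDerivAt_deriv_jacobiAmplitude hm x).differentiableAt

theorem deriv_deriv_jacobiAmplitude_add_cot_mul (hm : m < 1) (x : ℝ) :
    deriv (deriv (jacobiAmplitude m)) x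
      + cot (jacobiAmplitude m x) * (1 - deriv (jacobiAmplitude m) x ^ 2) = 0 := by
  rw [(hasDerivAt_deriv_jacobiAmplitude hm x).deriv, deriv_jacobiAmplitude hm,
    sq_sqrt (one_sub_mul_sin_sq_pos hm _).le, cot_eq_cos_div_sin]
  by_cases hsin : sin (jacobiAmplitude m x) = 0
  · simp [hsin]
  · field_simp
    ring

end Elliptic

/-- If `α > 0`, `b > 0` satisfy `∫₀^{π/2} du/√(1 − (1 − b²/α²)sin²u) = απ/2`,
then there is a strictly increasing continuous `g : [0, π] → [0, π]`, twice differentiable on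
`(0, π)`, with `∫₀^{g(y)} du/√(1 − (1 − b²/α²)sin²u) = αy` on `[0, π]`, satisfying
`g'' + cot(g)(α² − (g')²) = 0` on `(0, π)`, `g(0) = 0`, `g(π/2) = π/2`, `g'(π/2) = b` and
`g(π) = π`. -/
theorem stmt17 (α b : ℝ) (hα : 0 < α) (hb : 0 < b)
    (hK : (∫ u in (0 : ℝ)..(π / 2),
      1 / Real.sqrt (1 - (1 - b ^ 2 / α ^ 2) * Real.sin u ^ 2)) = α * π / 2) :
    ∃ g : ℝ → ℝ,
      StrictMonoOn g (Set.Icc 0 π) ∧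
      ContinuousOn g (Set.Icc 0 π) ∧
      Set.MapsTo g (Set.Icc 0 π) (Set.Icc 0 π) ∧
      (∀ y ∈ Set.Ioo 0 π, DifferentiableAt ℝ g y ∧ DifferentiableAt ℝ (deriv g) y) ∧
      (∀ y ∈ Set.Icc 0 π,
        ∫ u in (0 : ℝ)..(g y),
          1 / Real.sqrt (1 - (1 - b ^ 2 / α ^ 2) * Real.sin u ^ 2) = α * y) ∧
      (∀ y ∈ Set.Ioo 0 π,
        deriv (deriv g) y + Real.cot (g y) * (α ^ 2 - (deriv g y) ^ 2) = 0) ∧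
      g 0 = 0 ∧ g (π / 2) = π / 2 ∧ deriv g (π / 2) = b ∧ g π = π := by
  set m := 1 - b ^ 2 / α ^ 2 with hm_def
  have hm : m < 1 := sub_lt_self 1 (by positivity)
  have ham_eq {x θ : ℝ} (h : ellipticF m θ = x) : jacobiAmplitude m x = θ :=
    h ▸ jacobiAmplitude_ellipticF hm θ
  have hg0 : jacobiAmplitude m (α * 0) = 0 := by rw [mul_zero, jacobiAmplitude_zero hm]
  have hghalf : jacobiAmplitude m (α * (π / 2)) = π / 2 := ham_eq (by rw [ellipticF, hK]; ring)
  have hgpi : jacobiAmplitude m (α * π) = π :=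
    ham_eq (by rw [ellipticF_pi hm, ellipticF, hK]; ring)
  have hmono : StrictMono fun y => jacobiAmplitude m (α * y) :=
    (strictMono_jacobiAmplitude hm).comp (strictMono_mul_left_of_pos hα)
  have hg' : deriv (fun y => jacobiAmplitude m (α * y)) =
      fun y => α * deriv (jacobiAmplitude m) (α * y) :=
    funext fun y => deriv_comp_mul_left α (jacobiAmplitude m) y
  have hdiff := differentiable_jacobiAmplitude hm
  have hdiff' := differentiable_deriv_jacobiAmplitude hm
  refine ⟨fun y => jacobiAmplitude m (α * y), hmono.strictMonoOn _,
    ((continuous_jacobiAmplitude hm).comp (continuous_const_mul α)).continuousOn,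
    fun y hy => ⟨hg0 ▸ hmono.monotone hy.1, hgpi ▸ hmono.monotone hy.2⟩,
    fun y _ => ⟨by fun_prop, by rw [hg']; fun_prop⟩,
    fun y _ => ellipticF_jacobiAmplitude hm (α * y), fun y _ => ?_, hg0, hghalf, ?_, hgpi⟩
  · simp only [hg', deriv_const_mul_field', deriv_comp_mul_left, smul_eq_mul]
    linear_combination α ^ 2 * deriv_deriv_jacobiAmplitude_add_cot_mul hm (α * y)
  · simp only [hg', deriv_jacobiAmplitude hm]
    rw [hghalf, sin_pi_div_two, hm_def, one_pow, mul_one, sub_sub_cancel, ← div_pow,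
      sqrt_sq (by positivity), mul_div_cancel₀ b hα.ne']
end
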